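/- Let A be a positive random variable, p > 0 with E(A^{−p}) < ∞, and γ ∈ (0,1) with γ·E(A^{−p}) < 1. Let φ : (0,∞) → [0,1] be a measurable function and t₀ > 0 be such that φ(t) ≤ γ·E(φ(At)) for every t ≥ t₀. Then for every t ≥ t₀, φ(t) ≤ C·t^{−p} with C = t₀^p·γ·E(A^{−p}) / (1 − γ·E(A^{−p})); in particular φ(t) = O(t^{−p}) as t → ∞. -/

import Mathlib

open MeasureTheory Filter Set Asymptotics
open scoped ENNReal NNReal
noncomputable section

/-- If `A > 0` a.s., `E(A^{-p}) < ∞`, `γ ∈ (0,1)` with `γ·E(A^{-p}) < 1`,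
and `φ : (0,∞) → [0,1]` satisfies `φ(t) ≤ γ·E(φ(At))` for `t ≥ t₀ > 0`, then
`φ(t) ≤ C·t^{-p}` for all `t ≥ t₀`, with
`C = t₀^p·γ·E(A^{-p}) / (1 - γ·E(A^{-p}))`; in particular `φ(t) = O(t^{-p})` as `t → ∞`. -/
theorem statement5 (Ω : Type) [MeasureSpace Ω] [IsProbabilityMeasure (volume : Measure Ω)]
    (A : Ω → ℝ) (hA : Measurable A) (hApos : ∀ᵐ ω ∂volume, 0 < A ω)
    (p : ℝ) (hp : 0 < p) (hint : Integrable (fun ω => A ω ^ (-p)))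
    (γ : ℝ) (hγ : γ ∈ Set.Ioo (0:ℝ) 1) (hγE : γ * ∫ ω, A ω ^ (-p) < 1)
    (φ : ℝ → ℝ) (hφmeas : Measurable φ) (hφrange : ∀ t : ℝ, 0 < t → φ t ∈ Set.Icc (0:ℝ) 1)
    (t₀ : ℝ) (ht₀ : 0 < t₀)
    (hrec : ∀ t : ℝ, t₀ ≤ t → φ t ≤ γ * ∫ ω, φ (A ω * t)) :
    (∀ t : ℝ, t₀ ≤ t →
      φ t ≤ (t₀ ^ p * (γ * ∫ ω, A ω ^ (-p)) / (1 - γ * ∫ ω, A ω ^ (-p))) * t ^ (-p)) ∧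
    φ =O[atTop] (fun t => t ^ (-p)) := by
  obtain ⟨hγ0, hγ1⟩ := hγ
  set E : ℝ := ∫ ω, A ω ^ (-p) with hE
  have hE0 : 0 ≤ E := by
    apply integral_nonneg_of_ae
    filter_upwards [hApos] with ω hω
    exact Real.rpow_nonneg hω.le _
  have hm0 : 0 ≤ γ * E := mul_nonneg hγ0.le hE0
  -- key induction
  have key : ∀ n : ℕ, ∀ t : ℝ, t₀ ≤ t → φ t ≤ γ ^ n + (γ * E) * t₀ ^ p * t ^ (-p) := by
    intro n
    induction n with
    | zero =>
      intro t ht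
      have htpos : 0 < t := lt_of_lt_of_le ht₀ ht
      have h1 := (hφrange t htpos).2
      have h2 : 0 ≤ (γ * E) * t₀ ^ p * t ^ (-p) :=
        mul_nonneg (mul_nonneg hm0 (Real.rpow_nonneg ht₀.le _)) (Real.rpow_nonneg htpos.le _)
      simpa using le_add_of_le_of_nonneg h1 h2
    | succ n ih =>
      intro t ht
      have htpos : 0 < t := lt_of_lt_of_le ht₀ ht
      -- integrability of φ(At)
      have hmeasφA : AEStronglyMeasurable (fun ω => φ (A ω * t)) volume :=
        (hφmeas.comp (hA.mul_const t)).aestronglyMeasurable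
      have hintφA : Integrable (fun ω => φ (A ω * t)) := by
        refine (integrable_const (1:ℝ)).mono' hmeasφA ?_
        filter_upwards [hApos] with ω hω
        have := hφrange (A ω * t) (mul_pos hω htpos)
        rw [Real.norm_eq_abs, abs_le]
        exact ⟨by linarith [this.1], this.2⟩
      -- pointwise a.e. bound
      have hpt : ∀ᵐ ω ∂volume,
          φ (A ω * t) ≤ γ ^ n + (t₀ ^ p * t ^ (-p)) * A ω ^ (-p) := by
        filter_upwards [hApos] with ω hω
        have hat : 0 < A ω * t := mul_pos hω htpos
        have hsplit : (A ω * t) ^ (-p) = A ω ^ (-p) * t ^ (-p) :=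
          Real.mul_rpow hω.le htpos.le
        by_cases hcase : t₀ ≤ A ω * t
        · have hih := ih (A ω * t) hcase
          have hle : (γ * E) * t₀ ^ p * (A ω * t) ^ (-p)
              ≤ (t₀ ^ p * t ^ (-p)) * A ω ^ (-p) := by
            rw [hsplit]
            have h1 : 0 ≤ t₀ ^ p * (A ω ^ (-p) * t ^ (-p)) :=
              mul_nonneg (Real.rpow_nonneg ht₀.le _)
                (mul_nonneg (Real.rpow_nonneg hω.le _) (Real.rpow_nonneg htpos.le _))
            nlinarith [hγE, hm0]
          linarith
        · push_neg at hcase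
          have h1 : 1 ≤ (t₀ ^ p * t ^ (-p)) * A ω ^ (-p) := by
            have hx : (0:ℝ) < (A ω * t) ^ p := Real.rpow_pos_of_pos hat _
            have heq : (t₀ ^ p * t ^ (-p)) * A ω ^ (-p) = t₀ ^ p / (A ω * t) ^ p := by
              rw [Real.rpow_neg htpos.le, Real.rpow_neg hω.le,
                Real.mul_rpow hω.le htpos.le, div_eq_mul_inv, mul_inv]
              ring
            rw [heq, le_div_iff₀ hx, one_mul]
            exact Real.rpow_le_rpow hat.le hcase.le hp.le
          have h2 := (hφrange (A ω * t) hat).2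
          have h3 : (0:ℝ) ≤ γ ^ n := pow_nonneg hγ0.le n
          linarith
      -- integrate
      have hintr : Integrable (fun ω => γ ^ n + (t₀ ^ p * t ^ (-p)) * A ω ^ (-p)) :=
        (integrable_const _).add (hint.const_mul _)
      have hI : (∫ ω, φ (A ω * t)) ≤ ∫ ω, (γ ^ n + (t₀ ^ p * t ^ (-p)) * A ω ^ (-p)) :=
        integral_mono_ae hintφA hintr hpt
      have hIval : (∫ ω, (γ ^ n + (t₀ ^ p * t ^ (-p)) * A ω ^ (-p)))
          = γ ^ n + (t₀ ^ p * t ^ (-p)) * E := by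
        rw [integral_add (integrable_const _) (hint.const_mul _), integral_const,
          integral_const_mul, probReal_univ]
        simp [hE]
      calc φ t ≤ γ * ∫ ω, φ (A ω * t) := hrec t ht
        _ ≤ γ * (γ ^ n + (t₀ ^ p * t ^ (-p)) * E) := by
            rw [← hIval]; exact mul_le_mul_of_nonneg_left hI hγ0.le
        _ = γ ^ (n + 1) + (γ * E) * t₀ ^ p * t ^ (-p) := by ring
  -- pass to the limit n → ∞
  have hlim : ∀ t : ℝ, t₀ ≤ t → φ t ≤ (γ * E) * t₀ ^ p * t ^ (-p) := by
    intro t ht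
    have htend : Tendsto (fun n : ℕ => γ ^ n + (γ * E) * t₀ ^ p * t ^ (-p)) atTop
        (nhds ((γ * E) * t₀ ^ p * t ^ (-p))) := by
      have := (tendsto_pow_atTop_nhds_zero_of_lt_one hγ0.le hγ1).add
        (tendsto_const_nhds (x := (γ * E) * t₀ ^ p * t ^ (-p)))
      simpa using this
    exact ge_of_tendsto' htend (fun n => key n t ht)
  set C : ℝ := t₀ ^ p * (γ * E) / (1 - γ * E) with hC
  have h1m : 0 < 1 - γ * E := by linarith
  have hCge : (γ * E) * t₀ ^ p ≤ C := by
    rw [hC, le_div_iff₀ h1m]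
    nlinarith [mul_nonneg (mul_nonneg hm0 hm0) (Real.rpow_nonneg ht₀.le p)]
  have hmain : ∀ t : ℝ, t₀ ≤ t → φ t ≤ C * t ^ (-p) := by
    intro t ht
    have htpos : 0 < t := lt_of_lt_of_le ht₀ ht
    have := hlim t ht
    have hle : (γ * E) * t₀ ^ p * t ^ (-p) ≤ C * t ^ (-p) :=
      mul_le_mul_of_nonneg_right hCge (Real.rpow_nonneg htpos.le _)
    linarith
  refine ⟨hmain, ?_⟩
  rw [isBigO_iff]
  refine ⟨C, ?_⟩
  filter_upwards [eventually_ge_atTop (max t₀ 1)] with t ht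
  have ht₀' : t₀ ≤ t := le_trans (le_max_left _ _) ht
  have htpos : 0 < t := lt_of_lt_of_le ht₀ ht₀'
  have hφt := hφrange t htpos
  have hnorm1 : ‖φ t‖ = φ t := by rw [Real.norm_eq_abs, abs_of_nonneg hφt.1]
  have hnorm2 : ‖t ^ (-p)‖ = t ^ (-p) := by
    rw [Real.norm_eq_abs, abs_of_nonneg (Real.rpow_nonneg htpos.le _)]
  rw [hnorm1, hnorm2]
  exact hmain t ht₀'
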